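/- arXiv:2605.25478 — 5 statements merged into one kernel-verified Lean document; each statement's English description precedes it below -/
import Mathlib

section
/- Over all 24 permutations σ ∈ S_4, the number of σ with lag-1 transcript τ₁(σ) = π^[k] equals 2, 2, 2, 7, 7, 4 for k = 1, 2, 3, 4, 5, 6 respectively. Equivalently, under the uniform distribution on S_4, P(τ₁ = π^[k]) equals 2/24, 2/24, 2/24, 7/24, 7/24, 4/24 for k = 1,…,6. -/
open Equiv

/-- The transcript of an ordered pair of permutations: `τ(π₁,π₂) = π₁⁻¹ ∘ π₂`. -/
def transcript {m : ℕ} (π₁ π₂ : Perm (Fin m)) : Perm (Fin m) := π₁⁻¹ * π₂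

/-- The ordinal pattern of a triple `y` with pairwise distinct entries: the unique
permutation `π ∈ S_3` with `y (π 0) < y (π 1) < y (π 2)`. -/
noncomputable def opattern {α : Type*} [LinearOrder α] (y : Fin 3 → α) : Perm (Fin 3) :=
  if h : ∃ π : Perm (Fin 3), y (π 0) < y (π 1) ∧ y (π 1) < y (π 2) then h.choose else 1

/-- For `σ ∈ S_N`, viewed as the tuple `(σ 0, …, σ (N-1))`, the ordinal pattern of
the window `(σ t, σ (t+1), σ (t+2))` (0-based `t`). -/
noncomputable def patN {N : ℕ} (σ : Perm (Fin N)) (t : ℕ) (h : t + 2 < N) : Perm (Fin 3) :=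
  opattern fun i : Fin 3 => σ ⟨t + i, by have := i.isLt; omega⟩

/-- The lag-1 transcript of the ordinal patterns at (0-based) windows `t` and `t+1`;
this is `τ_{t+1}` in the 1-based numbering of the paper. -/
noncomputable def tauN {N : ℕ} (σ : Perm (Fin N)) (t : ℕ) (h : t + 3 < N) : Perm (Fin 3) :=
  transcript (patN σ t (by omega)) (patN σ (t + 1) (by omega))

/-- `π^[1] = (1,2,3)`, the identity. -/
def p1 : Perm (Fin 3) := 1
/-- `π^[2] = (1,3,2)`. -/
def p2 : Perm (Fin 3) := Equiv.swap 1 2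
/-- `π^[3] = (2,1,3)`. -/
def p3 : Perm (Fin 3) := Equiv.swap 0 1
/-- `π^[4] = (2,3,1)`, i.e. `0 ↦ 1 ↦ 2 ↦ 0`. -/
def p4 : Perm (Fin 3) := Equiv.swap 0 1 * Equiv.swap 1 2
/-- `π^[5] = (3,1,2)`, i.e. `0 ↦ 2 ↦ 1 ↦ 0`. -/
def p5 : Perm (Fin 3) := Equiv.swap 1 2 * Equiv.swap 0 1
/-- `π^[6] = (3,2,1)`. -/
def p6 : Perm (Fin 3) := Equiv.swap 0 2

/-- The labelling `k ↦ π^[k+1]` of the six elements of `S_3`. -/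
def lab : Fin 6 → Perm (Fin 3) := ![p1, p2, p3, p4, p5, p6]

/-!
For a triple with distinct entries the ordinal pattern is determined by the three pairwise
comparisons, because at most one arrangement of a triple can be strictly increasing. This
turns `τ₁` into a computable function of `σ ∈ S_4`, and the six counts are checked by
enumerating `S_4`.
-/

def patternOfCmp {α : Type*} [LinearOrder α] (a b c : α) : Perm (Fin 3) :=
  if a < b then (if b < c then p1 else if a < c then p2 else p5)
  else (if a < c then p3 else if b < c then p4 else p6)

lemma strictMono_comp_perm_of_lt {α : Type*} [Preorder α] {y : Fin 3 → α} {π : Perm (Fin 3)}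
    (h01 : y (π 0) < y (π 1)) (h12 : y (π 1) < y (π 2)) : StrictMono (y ∘ π) :=
  Fin.strictMono_iff_lt_succ.2 fun i => by fin_cases i <;> assumption

theorem opattern_eq_of_lt {α : Type*} [LinearOrder α] {y : Fin 3 → α} {π : Perm (Fin 3)}
    (h01 : y (π 0) < y (π 1)) (h12 : y (π 1) < y (π 2)) : opattern y = π := by
  have hex : ∃ ρ : Perm (Fin 3), y (ρ 0) < y (ρ 1) ∧ y (ρ 1) < y (ρ 2) := ⟨π, h01, h12⟩
  rw [opattern, dif_pos hex]
  have hπ := strictMono_comp_perm_of_lt h01 h12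
  have hy : Function.Injective y := by
    simpa [Function.comp_def] using hπ.injective.comp π.symm.injective
  have hrange : Set.range (y ∘ hex.choose) = Set.range (y ∘ π) := by
    simp only [Set.range_comp, Set.range_eq_univ.2 (Equiv.surjective _)]
  have hcomp : y ∘ hex.choose = y ∘ π :=
    ((strictMono_comp_perm_of_lt hex.choose_spec.1 hex.choose_spec.2).range_inj hπ).1 hrange
  exact Equiv.coe_fn_injective (hy.comp_left hcomp)

theorem opattern_eq_patternOfCmp {α : Type*} [LinearOrder α] {y : Fin 3 → α}
    (hy : Function.Injective y) : opattern y = patternOfCmp (y 0) (y 1) (y 2) := by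
  have h01 : y 0 ≠ y 1 := hy.ne (by decide)
  have h02 : y 0 ≠ y 2 := hy.ne (by decide)
  have h12 : y 1 ≠ y 2 := hy.ne (by decide)
  unfold patternOfCmp
  split_ifs <;> apply opattern_eq_of_lt <;>
    simp only [p1, p2, p3, p4, p5, p6, Perm.coe_one, id_eq, Perm.mul_apply, swap_apply_def,
      Fin.isValue, Fin.reduceEq, zero_ne_one, one_ne_zero, reduceIte] <;>
    order

theorem patN_eq_patternOfCmp {N : ℕ} (σ : Perm (Fin N)) (t : ℕ) (h : t + 2 < N) :
    patN σ t h = patternOfCmp (σ ⟨t, by omega⟩) (σ ⟨t + 1, by omega⟩) (σ ⟨t + 2, h⟩) := by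
  refine opattern_eq_patternOfCmp fun i j hij => Fin.ext ?_
  have := congrArg Fin.val (σ.injective hij)
  simp only at this
  omega

theorem tauN_eq_transcript_patternOfCmp {N : ℕ} (σ : Perm (Fin N)) (t : ℕ) (h : t + 3 < N) :
    tauN σ t h = transcript
      (patternOfCmp (σ ⟨t, by omega⟩) (σ ⟨t + 1, by omega⟩) (σ ⟨t + 2, by omega⟩))
      (patternOfCmp (σ ⟨t + 1, by omega⟩) (σ ⟨t + 2, by omega⟩) (σ ⟨t + 3, h⟩)) := by
  rw [tauN, patN_eq_patternOfCmp, patN_eq_patternOfCmp]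

theorem card_tauN_zero_eq (k : Fin 6) :
    Nat.card {σ : Perm (Fin 4) // tauN σ 0 (by norm_num) = lab k} = ![2, 2, 2, 7, 7, 4] k := by
  simp only [tauN_eq_transcript_patternOfCmp, Nat.card_eq_fintype_card]
  fin_cases k <;> decide

/-- Over all 24 permutations `σ ∈ S_4`, the number of `σ` with lag-1 transcript
`τ₁(σ) = π^[k]` equals `2, 2, 2, 7, 7, 4` for `k = 1,…,6`; equivalently, under the
uniform distribution on `S_4`, `P(τ₁ = π^[k])` is `(1/24)·(2,2,2,7,7,4)_k`. -/
theorem transcript_marginal_iid : ∀ k : Fin 6,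
    Nat.card {σ : Perm (Fin 4) // tauN σ 0 (by omega) = lab k} = ![2, 2, 2, 7, 7, 4] k ∧
    (Nat.card {σ : Perm (Fin 4) // tauN σ 0 (by omega) = lab k} : ℚ) / 24 =
      ![2/24, 2/24, 2/24, 7/24, 7/24, 4/24] k := by
  intro k
  refine ⟨card_tauN_zero_eq k, ?_⟩
  rw [card_tauN_zero_eq k]
  fin_cases k <;> norm_num
end

section
/- Let p ∈ (0,1) and q = 1 − p. Let P : S_3 × S_3 → ℝ be the function whose matrix, with rows and columns indexed by π^[1],…,π^[6], has rows (p³, p³q, 0, 0, p²q², 0), (0, 0, p⁴q, p³q², 0, p²q²), (p³q, p³q², 0, 0, p²q³, 0), (p²q², p²q³, 0, 0, pq⁴, 0), (0, 0, p³q², p²q³, 0, pq³), (0, 0, p²q², pq³, 0, q³) (the lag-1 ordinal-pattern distribution of the generalized coin-tossing process). For k = 1,…,6 define p_{τ;k} := Σ_{(a,b) ∈ S_3×S_3, τ(a,b)=π^[k]} P(a,b). Then (p_{τ;1},…,p_{τ;6}) = (p³+q³, pq(p²+q²), pq(p²+q²), pq²(1+2p²), p²q(1+2q²), 2p²q²).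 Moreover, the induced distribution of the Cayley distance q_C(d) := Σ_{(a,b): d_C(a,b)=d} P(a,b) equals (p³+q³, 2pq(p²+q), pq(1+2pq)) on {0,1,2} with mean 2pq(2+pq) and variance 2pq(3+pq)(1−2pq−2p²q²), and the induced distribution of the Kendall distance q_K(d) := Σ_{(a,b): d_K(a,b)=d} P(a,b) equals (p³+q³, 2pq(p²+q²), pq(1+2pq), 2p²q²) on {0,1,2,3} with mean 2pq(2+3pq) and variance 6pq(1+3pq)(1−2pq−2p²q²). -/
open Equiv

/-- A permutation of `{1,…,m}` is an adjacent transposition if it is a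
transposition of the form `(i, i+1)`. -/
def IsAdjSwap {m : ℕ} (s : Perm (Fin m)) : Prop :=
  ∃ i : ℕ, ∃ h : i + 1 < m, s = Equiv.swap ⟨i, Nat.lt_of_succ_lt h⟩ ⟨i + 1, h⟩

/-- The Cayley distance: the least `k` such that the transcript of `π₁, π₂` is a
product of `k` transpositions. -/
noncomputable def dC {m : ℕ} (π₁ π₂ : Perm (Fin m)) : ℕ :=
  sInf {k : ℕ | ∃ l : List (Perm (Fin m)), l.length = k ∧ (∀ s ∈ l, s.IsSwap) ∧
    l.prod = transcript π₁ π₂}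

/-- The Kendall distance: the least `k` such that the transcript of `π₁, π₂` is a
product of `k` adjacent transpositions. -/
noncomputable def dK {m : ℕ} (π₁ π₂ : Perm (Fin m)) : ℕ :=
  sInf {k : ℕ | ∃ l : List (Perm (Fin m)), l.length = k ∧ (∀ s ∈ l, IsAdjSwap s) ∧
    l.prod = transcript π₁ π₂}

/-- The lag-1 ordinal-pattern distribution of the generalized coin-tossing process
with success probability `p` (and `q = 1 - p`), indexed by `π^[1],…,π^[6]`. -/
noncomputable def gctMat (p q : ℝ) : Matrix (Fin 6) (Fin 6) ℝ :=
  !![p^3,     p^3*q,   0,       0,       p^2*q^2, 0;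
     0,       0,       p^4*q,   p^3*q^2, 0,       p^2*q^2;
     p^3*q,   p^3*q^2, 0,       0,       p^2*q^3, 0;
     p^2*q^2, p^2*q^3, 0,       0,       p*q^4,   0;
     0,       0,       p^3*q^2, p^2*q^3, 0,       p*q^3;
     0,       0,       p^2*q^2, p*q^3,   0,       q^3]

/-- The index of a permutation of `S_3` in the labelling `π^[1],…,π^[6]`. -/
def idx (a : Perm (Fin 3)) : Fin 6 :=
  if a = p1 then 0 else if a = p2 then 1 else if a = p3 then 2
  else if a = p4 then 3 else if a = p5 then 4 else 5

/-- The GCT lag-1 joint probability of the pair of ordinal patterns `(a, b)`. -/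
noncomputable def Pgct (p q : ℝ) (a b : Perm (Fin 3)) : ℝ := gctMat p q (idx a) (idx b)

/-- The induced marginal probability of the transcript `π^[k]`. -/
noncomputable def ptau (p q : ℝ) (k : Fin 6) : ℝ :=
  ∑ a : Perm (Fin 3), ∑ b : Perm (Fin 3), if transcript a b = lab k then Pgct p q a b else 0

/-- The induced distribution of the Cayley distance. -/
noncomputable def qC (p q : ℝ) (d : ℕ) : ℝ :=
  ∑ a : Perm (Fin 3), ∑ b : Perm (Fin 3), if dC a b = d then Pgct p q a b else 0

/-- The induced distribution of the Kendall distance. -/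
noncomputable def qK (p q : ℝ) (d : ℕ) : ℝ :=
  ∑ a : Perm (Fin 3), ∑ b : Perm (Fin 3), if dK a b = d then Pgct p q a b else 0


/-! ### Auxiliary lemmas -/

lemma adjSwap_isSwap {m : ℕ} {s : Perm (Fin m)} (h : IsAdjSwap s) : s.IsSwap := by
  obtain ⟨i, hi, rfl⟩ := h
  exact ⟨_, _, by simp [Fin.ext_iff], rfl⟩

lemma adjSwap3 {s : Perm (Fin 3)} (h : IsAdjSwap s) :
    s = Equiv.swap 0 1 ∨ s = Equiv.swap 1 2 := by
  obtain ⟨i, hi, rfl⟩ := h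
  have h2 : i = 0 ∨ i = 1 := by omega
  rcases h2 with rfl | rfl
  · left; rfl
  · right; rfl

lemma adjSwap_swap01 : IsAdjSwap (Equiv.swap 0 1 : Perm (Fin 3)) := ⟨0, by omega, by decide⟩
lemma adjSwap_swap12 : IsAdjSwap (Equiv.swap 1 2 : Perm (Fin 3)) := ⟨1, by omega, by decide⟩

section
variable {a b : Perm (Fin 3)}

lemma dC_zero (h : transcript a b = 1) : dC a b = 0 :=
  Nat.sInf_eq_zero.mpr (Or.inl ⟨[], rfl, by simp, by simp [h]⟩)

lemma dC_one (h : transcript a b = p2 ∨ transcript a b = p3 ∨ transcript a b = p6) :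
    dC a b = 1 := by
  have hsw : (transcript a b).IsSwap := by
    rcases h with h | h | h <;> rw [h]
    exacts [⟨1, 2, by decide, rfl⟩, ⟨0, 1, by decide, rfl⟩, ⟨0, 2, by decide, rfl⟩]
  have hne : transcript a b ≠ 1 := by rcases h with h | h | h <;> rw [h] <;> decide
  unfold dC
  have hmem : 1 ∈ {k : ℕ | ∃ l : List (Perm (Fin 3)), l.length = k ∧
      (∀ s ∈ l, s.IsSwap) ∧ l.prod = transcript a b} :=
    ⟨[transcript a b], rfl, by simpa using hsw, by simp⟩
  refine le_antisymm (Nat.sInf_le hmem) ?_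
  rw [Nat.one_le_iff_ne_zero]
  intro h0
  rcases Nat.sInf_eq_zero.mp h0 with h' | h'
  · obtain ⟨l, hl, -, hp⟩ := h'
    rw [List.length_eq_zero_iff.mp hl] at hp
    exact hne (by simpa using hp.symm)
  · exact absurd hmem (by simp [h'])

lemma dC_two (h : transcript a b = p4 ∨ transcript a b = p5) : dC a b = 2 := by
  have hne : transcript a b ≠ 1 := by rcases h with h | h <;> rw [h] <;> decide
  have hsgn : Equiv.Perm.sign (transcript a b) = 1 := by
    rcases h with h | h <;> rw [h] <;> decide
  unfold dC
  have hmem : 2 ∈ {k : ℕ | ∃ l : List (Perm (Fin 3)), l.length = k ∧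
      (∀ s ∈ l, s.IsSwap) ∧ l.prod = transcript a b} := by
    rcases h with h | h
    · exact ⟨[Equiv.swap 0 1, Equiv.swap 1 2], rfl, by
        intro s hs; simp at hs
        rcases hs with rfl | rfl
        exacts [⟨0, 1, by decide, rfl⟩, ⟨1, 2, by decide, rfl⟩], by simp [h, p4]⟩
    · exact ⟨[Equiv.swap 1 2, Equiv.swap 0 1], rfl, by
        intro s hs; simp at hs
        rcases hs with rfl | rfl
        exacts [⟨1, 2, by decide, rfl⟩, ⟨0, 1, by decide, rfl⟩], by simp [h, p5]⟩
  refine le_antisymm (Nat.sInf_le hmem) ?_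
  obtain ⟨l, hl, hs, hpr⟩ := Nat.sInf_mem ⟨2, hmem⟩
  have hsign := Equiv.Perm.sign_prod_list_swap hs
  rw [hpr, hsgn] at hsign
  have hev : Even l.length := by
    rwa [← neg_one_pow_eq_one_iff_even (by decide : (-1 : ℤˣ) ≠ 1), eq_comm]
  have hne0 : l.length ≠ 0 := fun h0 => by
    rw [List.length_eq_zero_iff.mp h0] at hpr
    exact hne (by simpa using hpr.symm)
  obtain ⟨m, hm⟩ := hev
  omega

lemma dK_zero (h : transcript a b = 1) : dK a b = 0 :=
  Nat.sInf_eq_zero.mpr (Or.inl ⟨[], rfl, by simp, by simp [h]⟩)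

lemma dK_one (h : transcript a b = p2 ∨ transcript a b = p3) : dK a b = 1 := by
  have hsw : IsAdjSwap (transcript a b) := by
    rcases h with h | h <;> rw [h]
    exacts [adjSwap_swap12, adjSwap_swap01]
  have hne : transcript a b ≠ 1 := by rcases h with h | h <;> rw [h] <;> decide
  unfold dK
  have hmem : 1 ∈ {k : ℕ | ∃ l : List (Perm (Fin 3)), l.length = k ∧
      (∀ s ∈ l, IsAdjSwap s) ∧ l.prod = transcript a b} :=
    ⟨[transcript a b], rfl, by simpa using hsw, by simp⟩
  refine le_antisymm (Nat.sInf_le hmem) ?_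
  rw [Nat.one_le_iff_ne_zero]
  intro h0
  rcases Nat.sInf_eq_zero.mp h0 with h' | h'
  · obtain ⟨l, hl, -, hpr⟩ := h'
    rw [List.length_eq_zero_iff.mp hl] at hpr
    exact hne (by simpa using hpr.symm)
  · exact absurd hmem (by simp [h'])

lemma dK_two (h : transcript a b = p4 ∨ transcript a b = p5) : dK a b = 2 := by
  have hne : transcript a b ≠ 1 := by rcases h with h | h <;> rw [h] <;> decide
  have hsgn : Equiv.Perm.sign (transcript a b) = 1 := by
    rcases h with h | h <;> rw [h] <;> decide
  unfold dK
  have hmem : 2 ∈ {k : ℕ | ∃ l : List (Perm (Fin 3)), l.length = k ∧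
      (∀ s ∈ l, IsAdjSwap s) ∧ l.prod = transcript a b} := by
    rcases h with h | h
    · exact ⟨[Equiv.swap 0 1, Equiv.swap 1 2], rfl, by
        intro s hs; simp at hs
        rcases hs with rfl | rfl
        exacts [adjSwap_swap01, adjSwap_swap12], by simp [h, p4]⟩
    · exact ⟨[Equiv.swap 1 2, Equiv.swap 0 1], rfl, by
        intro s hs; simp at hs
        rcases hs with rfl | rfl
        exacts [adjSwap_swap12, adjSwap_swap01], by simp [h, p5]⟩
  refine le_antisymm (Nat.sInf_le hmem) ?_
  obtain ⟨l, hl, hs, hpr⟩ := Nat.sInf_mem ⟨2, hmem⟩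
  have hsign := Equiv.Perm.sign_prod_list_swap (fun s hs' => adjSwap_isSwap (hs s hs'))
  rw [hpr, hsgn] at hsign
  have hev : Even l.length := by
    rwa [← neg_one_pow_eq_one_iff_even (by decide : (-1 : ℤˣ) ≠ 1), eq_comm]
  have hne0 : l.length ≠ 0 := fun h0 => by
    rw [List.length_eq_zero_iff.mp h0] at hpr
    exact hne (by simpa using hpr.symm)
  obtain ⟨m, hm⟩ := hev
  omega

lemma dK_three (h : transcript a b = p6) : dK a b = 3 := by
  unfold dK
  have hmem : 3 ∈ {k : ℕ | ∃ l : List (Perm (Fin 3)), l.length = k ∧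
      (∀ s ∈ l, IsAdjSwap s) ∧ l.prod = transcript a b} :=
    ⟨[Equiv.swap 0 1, Equiv.swap 1 2, Equiv.swap 0 1], rfl, by
      intro s hs; simp at hs
      rcases hs with rfl | rfl | rfl
      exacts [adjSwap_swap01, adjSwap_swap12, adjSwap_swap01], by
      rw [h]; decide⟩
  refine le_antisymm (Nat.sInf_le hmem) ?_
  obtain ⟨l, hl, hs, hpr⟩ := Nat.sInf_mem ⟨3, hmem⟩
  have hsign := Equiv.Perm.sign_prod_list_swap (fun s hs' => adjSwap_isSwap (hs s hs'))
  rw [hpr, h] at hsign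
  have hodd : Odd l.length := by
    rw [(by decide : Equiv.Perm.sign p6 = -1)] at hsign
    rcases Nat.even_or_odd l.length with he | ho
    · exfalso
      rw [he.neg_one_pow] at hsign
      exact absurd hsign.symm (by decide)
    · exact ho
  have hne1 : l.length ≠ 1 := by
    intro h1
    obtain ⟨s, rfl⟩ := List.length_eq_one_iff.mp h1
    have hadj := hs s (by simp)
    have hps : s = transcript a b := by simpa using hpr
    rw [h] at hps
    rcases adjSwap3 hadj with h' | h' <;> rw [h'] at hps <;> exact absurd hps (by decide)
  obtain ⟨m, hm⟩ := hodd
  omega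

end

/-- The transcript table: `transcript (lab i) (lab j) = lab (Tt i j)`. -/
def Tt : Fin 6 → Fin 6 → Fin 6 :=
  ![![0,1,2,3,4,5], ![1,0,4,5,2,3], ![2,3,0,1,5,4],
    ![4,5,1,0,3,2], ![3,2,5,4,0,1], ![5,4,3,2,1,0]]

/-- Cayley distance table on transcript indices. -/
def dCt : Fin 6 → Fin 6 → ℕ :=
  ![![0,1,1,2,2,1], ![1,0,2,1,1,2], ![1,2,0,1,1,2],
    ![2,1,1,0,2,1], ![2,1,1,2,0,1], ![1,2,2,1,1,0]]

/-- Kendall distance table on transcript indices. -/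
def dKt : Fin 6 → Fin 6 → ℕ :=
  ![![0,1,1,2,2,3], ![1,0,2,3,1,2], ![1,2,0,1,3,2],
    ![2,3,1,0,2,1], ![2,1,3,2,0,1], ![3,2,2,1,1,0]]

lemma vec6_five {α : Type*} (a b c d e f : α) : ![a, b, c, d, e, f] 5 = f := rfl

lemma trans_lab : ∀ i j : Fin 6, transcript (lab i) (lab j) = lab (Tt i j) := by decide

lemma lab_inj : ∀ i j : Fin 6, lab i = lab j ↔ i = j := by decide

lemma idx_lab : ∀ i : Fin 6, idx (lab i) = i := by decide

lemma lab_bij : Function.Bijective lab := by decide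

lemma dC_lab : ∀ i j : Fin 6, dC (lab i) (lab j) = dCt i j := by
  intro i j
  fin_cases i <;> fin_cases j <;>
    first
      | exact dC_zero (by decide)
      | exact dC_one (by decide)
      | exact dC_two (by decide)

lemma dK_lab : ∀ i j : Fin 6, dK (lab i) (lab j) = dKt i j := by
  intro i j
  fin_cases i <;> fin_cases j <;>
    first
      | exact dK_zero (by decide)
      | exact dK_one (by decide)
      | exact dK_two (by decide)
      | exact dK_three (by decide)

lemma sum_perm (f : Perm (Fin 3) → ℝ) : ∑ a : Perm (Fin 3), f a = ∑ i : Fin 6, f (lab i) :=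
  (Fintype.sum_bijective lab lab_bij _ _ (fun _ => rfl)).symm

lemma double_sum (f : Perm (Fin 3) → Perm (Fin 3) → ℝ) :
    (∑ a : Perm (Fin 3), ∑ b : Perm (Fin 3), f a b) =
      ∑ i : Fin 6, ∑ j : Fin 6, f (lab i) (lab j) := by
  rw [sum_perm (fun a => ∑ b : Perm (Fin 3), f a b)]
  exact Finset.sum_congr rfl (fun i _ => sum_perm _)

lemma ptau_eval (p q : ℝ) (k : Fin 6) :
    ptau p q k = ∑ i : Fin 6, ∑ j : Fin 6,
      if Tt i j = k then gctMat p q i j else 0 := by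
  rw [ptau, double_sum]
  simp only [trans_lab, lab_inj, Pgct, idx_lab]

lemma qC_eval (p q : ℝ) (d : ℕ) :
    qC p q d = ∑ i : Fin 6, ∑ j : Fin 6, if dCt i j = d then gctMat p q i j else 0 := by
  rw [qC, double_sum]
  simp only [dC_lab, Pgct, idx_lab]

lemma qK_eval (p q : ℝ) (d : ℕ) :
    qK p q d = ∑ i : Fin 6, ∑ j : Fin 6, if dKt i j = d then gctMat p q i j else 0 := by
  rw [qK, double_sum]
  simp only [dK_lab, Pgct, idx_lab]

/-- Transcript and distance distributions of the generalized coin-tossing process. -/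
theorem gct_transcript_distribution (p q : ℝ) (hp : 0 < p) (hp1 : p < 1) (hq : q = 1 - p) :
    (∀ k : Fin 6, ptau p q k =
      ![p^3 + q^3, p*q*(p^2 + q^2), p*q*(p^2 + q^2), p*q^2*(1 + 2*p^2),
        p^2*q*(1 + 2*q^2), 2*p^2*q^2] k) ∧
    (qC p q 0 = p^3 + q^3 ∧ qC p q 1 = 2*p*q*(p^2 + q) ∧ qC p q 2 = p*q*(1 + 2*p*q)) ∧
    (∑ d ∈ Finset.range 3, (d : ℝ) * qC p q d) = 2*p*q*(2 + p*q) ∧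
    (∑ d ∈ Finset.range 3, (d : ℝ) ^ 2 * qC p q d) -
      (∑ d ∈ Finset.range 3, (d : ℝ) * qC p q d) ^ 2 =
        2*p*q*(3 + p*q)*(1 - 2*p*q - 2*p^2*q^2) ∧
    (qK p q 0 = p^3 + q^3 ∧ qK p q 1 = 2*p*q*(p^2 + q^2) ∧
      qK p q 2 = p*q*(1 + 2*p*q) ∧ qK p q 3 = 2*p^2*q^2) ∧
    (∑ d ∈ Finset.range 4, (d : ℝ) * qK p q d) = 2*p*q*(2 + 3*p*q) ∧
    (∑ d ∈ Finset.range 4, (d : ℝ) ^ 2 * qK p q d) -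
      (∑ d ∈ Finset.range 4, (d : ℝ) * qK p q d) ^ 2 =
        6*p*q*(1 + 3*p*q)*(1 - 2*p*q - 2*p^2*q^2) := by
  subst hq
  have hC0 : qC p (1-p) 0 = p^3 + (1-p)^3 := by
    rw [qC_eval]
    simp [dCt, gctMat, Fin.sum_univ_succ, Matrix.cons_val_zero, Matrix.cons_val_succ]
    try ring
  have hC1 : qC p (1-p) 1 = 2*p*(1-p)*(p^2 + (1-p)) := by
    rw [qC_eval]
    simp [dCt, gctMat, Fin.sum_univ_succ, Matrix.cons_val_zero, Matrix.cons_val_succ]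
    try ring
  have hC2 : qC p (1-p) 2 = p*(1-p)*(1 + 2*p*(1-p)) := by
    rw [qC_eval]
    simp [dCt, gctMat, Fin.sum_univ_succ, Matrix.cons_val_zero, Matrix.cons_val_succ]
    try ring
  have hK0 : qK p (1-p) 0 = p^3 + (1-p)^3 := by
    rw [qK_eval]
    simp [dKt, gctMat, Fin.sum_univ_succ, Matrix.cons_val_zero, Matrix.cons_val_succ]
    try ring
  have hK1 : qK p (1-p) 1 = 2*p*(1-p)*(p^2 + (1-p)^2) := by
    rw [qK_eval]
    simp [dKt, gctMat, Fin.sum_univ_succ, Matrix.cons_val_zero, Matrix.cons_val_succ]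
    try ring
  have hK2 : qK p (1-p) 2 = p*(1-p)*(1 + 2*p*(1-p)) := by
    rw [qK_eval]
    simp [dKt, gctMat, Fin.sum_univ_succ, Matrix.cons_val_zero, Matrix.cons_val_succ]
    try ring
  have hK3 : qK p (1-p) 3 = 2*p^2*(1-p)^2 := by
    rw [qK_eval]
    simp [dKt, gctMat, Fin.sum_univ_succ, Matrix.cons_val_zero, Matrix.cons_val_succ]
    try ring
  refine ⟨?_, ⟨hC0, hC1, hC2⟩, ?_, ?_, ⟨hK0, hK1, hK2, hK3⟩, ?_, ?_⟩
  · intro k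
    fin_cases k <;>
      · rw [ptau_eval]
        simp [Tt, gctMat, Fin.sum_univ_succ, Matrix.cons_val_zero, Matrix.cons_val_succ,
          vec6_five]
        try ring
  · simp only [Finset.sum_range_succ, Finset.sum_range_zero, hC0, hC1, hC2]
    push_cast; ring
  · simp only [Finset.sum_range_succ, Finset.sum_range_zero, hC0, hC1, hC2]
    push_cast; ring
  · simp only [Finset.sum_range_succ, Finset.sum_range_zero, hK0, hK1, hK2, hK3]
    push_cast; ring
  · simp only [Finset.sum_range_succ, Finset.sum_range_zero, hK0, hK1, hK2, hK3]
    push_cast; ring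
end

section
/- For every k, l ∈ {1,…,6}, the number of permutations σ ∈ S_6 with (τ₁(σ), τ₃(σ)) = (π^[k], π^[l]) equals the (k,l) entry of the 6×6 matrix with rows (2,7,7,18,18,8), (7,0,14,25,6,8), (7,14,0,6,25,8), (18,6,25,77,48,36), (18,25,6,48,77,36), (8,8,8,36,36,24). Equivalently, under the uniform distribution on S_6, P(τ₁ = π^[k], τ₃ = π^[l]) equals 1/720 times that entry. -/
/-!
The six values of `σ` are distinct, so the ordinal pattern of a window `(a, b, c)` is the
permutation `cmpPattern a b c` read off from the comparisons `a < b`, `b < c`, `a < c`: it is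
the only `π` along which `(a, b, c)` increases, uniqueness coming from `Tuple.unique_monotone`.
The transcripts then become computable functions of `σ`, and the counts are evaluated over
all `720` permutations by `decide`.
-/

open Equiv

/-- The lag-2 bivariate transcript counts over `S_6`. -/
def M12 : Matrix (Fin 6) (Fin 6) ℕ :=
  !![2, 7, 7, 18, 18, 8;
     7, 0, 14, 25, 6, 8;
     7, 14, 0, 6, 25, 8;
     18, 6, 25, 77, 48, 36;
     18, 25, 6, 48, 77, 36;
     8, 8, 8, 36, 36, 24]

theorem Equiv.Perm.eq_of_strictMono_comp {α : Type*} [PartialOrder α] {n : ℕ} {y : Fin n → α}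
    {π ρ : Perm (Fin n)} (hπ : StrictMono (y ∘ π)) (hρ : StrictMono (y ∘ ρ)) : π = ρ := by
  have hyπρ : y ∘ π = y ∘ ρ := Tuple.unique_monotone hπ.monotone hρ.monotone
  refine Equiv.ext fun i => ?_
  have hi : π.symm (ρ i) = i :=
    hπ.injective (by simpa using (congrFun hyπρ i).symm)
  exact (congrArg π hi).symm.trans (π.apply_symm_apply _)

theorem Fin.strictMono_three_iff {α : Type*} [Preorder α] {f : Fin 3 → α} :
    StrictMono f ↔ f 0 < f 1 ∧ f 1 < f 2 := by
  rw [Fin.strictMono_iff_lt_succ, Fin.forall_fin_two]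
  rfl

theorem opattern_eq_of_strictMono {α : Type*} [LinearOrder α] {y : Fin 3 → α} {π : Perm (Fin 3)}
    (hπ : StrictMono (y ∘ π)) : opattern y = π := by
  have hex : ∃ ρ : Perm (Fin 3), y (ρ 0) < y (ρ 1) ∧ y (ρ 1) < y (ρ 2) :=
    ⟨π, Fin.strictMono_three_iff.1 hπ⟩
  rw [opattern, dif_pos hex]
  exact Perm.eq_of_strictMono_comp (Fin.strictMono_three_iff.2 hex.choose_spec) hπ

def cmpPattern {α : Type*} [LinearOrder α] (a b c : α) : Perm (Fin 3) :=
  if a < b then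
    (if b < c then p1 else if a < c then p2 else p5)
  else
    (if a < c then p3 else if b < c then p4 else p6)

theorem strictMono_comp_cmpPattern {α : Type*} [LinearOrder α] {y : Fin 3 → α}
    (hy : Function.Injective y) : StrictMono (y ∘ cmpPattern (y 0) (y 1) (y 2)) := by
  have h01 : y 0 ≠ y 1 := hy.ne (by decide)
  have h02 : y 0 ≠ y 2 := hy.ne (by decide)
  have h12 : y 1 ≠ y 2 := hy.ne (by decide)
  rw [Fin.strictMono_three_iff]
  unfold cmpPattern
  split_ifs <;>
    simp only [p1, p2, p3, p4, p5, p6, Perm.coe_one, Perm.coe_mul, Function.comp_apply, id_eq,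
      swap_apply_left, swap_apply_right, swap_apply_of_ne_of_ne, ne_eq, zero_ne_one, one_ne_zero,
      Fin.reduceEq, not_false_eq_true, Fin.isValue] <;>
    grind

theorem patN_eq_cmpPattern {N : ℕ} (σ : Perm (Fin N)) (t : ℕ) (h : t + 2 < N) :
    patN σ t h = cmpPattern (σ ⟨t, by omega⟩) (σ ⟨t + 1, by omega⟩) (σ ⟨t + 2, by omega⟩) :=
  opattern_eq_of_strictMono <| strictMono_comp_cmpPattern fun i j hij =>
    Fin.ext <| by simpa using congrArg Fin.val (σ.injective hij)

def cmpTranscript {α : Type*} [LinearOrder α] (a b c d : α) : Perm (Fin 3) :=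
  transcript (cmpPattern a b c) (cmpPattern b c d)

theorem tauN_eq_cmpTranscript {N : ℕ} (σ : Perm (Fin N)) (t : ℕ) (h : t + 3 < N) :
    tauN σ t h = cmpTranscript (σ ⟨t, by omega⟩) (σ ⟨t + 1, by omega⟩) (σ ⟨t + 2, by omega⟩)
      (σ ⟨t + 3, by omega⟩) := by
  rw [tauN, patN_eq_cmpPattern, patN_eq_cmpPattern]
  rfl

set_option maxRecDepth 100000 in
set_option maxHeartbeats 4000000 in
theorem card_cmpTranscript_eq (k l : Fin 6) :
    Fintype.card {σ : Perm (Fin 6) // cmpTranscript (σ 0) (σ 1) (σ 2) (σ 3) = lab k ∧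
      cmpTranscript (σ 2) (σ 3) (σ 4) (σ 5) = lab l} = M12 k l := by
  fin_cases k <;> fin_cases l <;> decide

/-- For all `k, l`, the number of `σ ∈ S_6` with `(τ₁(σ), τ₃(σ)) = (π^[k], π^[l])`
is the `(k,l)` entry of `M12`; equivalently, under the uniform distribution on
`S_6`, `P(τ₁ = π^[k], τ₃ = π^[l]) = M12 k l / 720`. -/
theorem transcript_biv2_iid : ∀ k l : Fin 6,
    Nat.card {σ : Perm (Fin 6) //
        tauN σ 0 (by omega) = lab k ∧ tauN σ 2 (by omega) = lab l} = M12 k l ∧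
    (Nat.card {σ : Perm (Fin 6) //
        tauN σ 0 (by omega) = lab k ∧ tauN σ 2 (by omega) = lab l} : ℚ) / 720 =
      (1/720 : ℚ) * (M12 k l : ℚ) := by
  intro k l
  have hcard : Nat.card {σ : Perm (Fin 6) //
      tauN σ 0 (by omega) = lab k ∧ tauN σ 2 (by omega) = lab l} = M12 k l := by
    simp only [tauN_eq_cmpTranscript]
    rw [Nat.card_eq_fintype_card]
    exact card_cmpTranscript_eq k l
  refine ⟨hcard, ?_⟩
  rw [hcard]
  ring
end

section
/- Let N ≥ 8 and let s, t satisfy 1 ≤ t, t + 4 ≤ s, and s + 3 ≤ N (so that the lag h = s − t is at least 4). Then under the uniform distribution on S_N, the transcripts τ_t and τ_s are independent: for all k, l ∈ {1,…,6}, P(τ_t = π^[k], τ_s = π^[l]) = P(τ_t = π^[k]) · P(τ_s = π^[l]), and both marginals equal (1/24)(2,2,2,7,7,4) (ordered over k = 1,…,6). -/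
open Equiv

/-- The marginal transcript distribution under the i.i.d. null. -/
noncomputable def pvec : Fin 6 → ℚ := ![2/24, 2/24, 2/24, 7/24, 7/24, 4/24]

open Function
section sortlemmas
variable {α : Type*} [LinearOrder α] {n : ℕ}

lemma sort_unique {y : Fin n → α} (hy : Injective y) {π ρ : Perm (Fin n)}
    (hπ : StrictMono (y ∘ π)) (hρ : StrictMono (y ∘ ρ)) : π = ρ := by
  have i1 : WellFoundedLT (Fin n) := inferInstance
  have hr : Set.range (y ∘ ⇑π) = Set.range (y ∘ ⇑ρ) := by
    rw [Set.range_comp, Set.range_comp, Set.range_eq_univ.2 π.surjective,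
      Set.range_eq_univ.2 ρ.surjective]
  have h : y ∘ ⇑π = y ∘ ⇑ρ := (StrictMono.range_inj hπ hρ).1 hr
  exact Equiv.ext fun i => hy (congrFun h i)

lemma strictMono_sort {y : Fin n → α} (hy : Injective y) :
    StrictMono (y ∘ Tuple.sort y) :=
  (Tuple.monotone_sort y).strictMono_of_injective (hy.comp (Tuple.sort y).injective)

lemma sort_comp_perm {y : Fin n → α} (hy : Injective y) (ρ : Perm (Fin n)) :
    Tuple.sort (y ∘ ρ) = ρ⁻¹ * Tuple.sort y := by
  have h1 : StrictMono ((y ∘ ⇑ρ) ∘ ⇑(Tuple.sort (y ∘ ⇑ρ))) :=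
    strictMono_sort (hy.comp ρ.injective)
  have h2 : StrictMono ((y ∘ ⇑ρ) ∘ ⇑(ρ⁻¹ * Tuple.sort y)) := by
    have e : (y ∘ ⇑ρ) ∘ ⇑(ρ⁻¹ * Tuple.sort y) = y ∘ ⇑(Tuple.sort y) := by
      funext i; simp [Perm.mul_apply]
    rw [e]; exact strictMono_sort hy
  exact sort_unique (hy.comp ρ.injective) h1 h2

lemma strictMono_of3 {z : Fin 3 → α} (h1 : z 0 < z 1) (h2 : z 1 < z 2) : StrictMono z := by
  intro i j hij
  fin_cases i <;> fin_cases j <;>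
    first
      | exact absurd hij (by decide)
      | exact h1
      | exact h2
      | exact h1.trans h2
end sortlemmas

section opat
variable {α : Type*} [LinearOrder α]

lemma opattern_eq_of {y : Fin 3 → α} (hy : Function.Injective y) {π : Perm (Fin 3)}
    (h : StrictMono (y ∘ π)) : opattern y = π := by
  have hex : ∃ ρ : Perm (Fin 3), y (ρ 0) < y (ρ 1) ∧ y (ρ 1) < y (ρ 2) :=
    ⟨π, h (show (0 : Fin 3) < 1 by decide), h (show (1 : Fin 3) < 2 by decide)⟩
  rw [opattern, dif_pos hex]
  exact sort_unique hy (strictMono_of3 hex.choose_spec.1 hex.choose_spec.2) h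

/-- explicit computable sorting of a triple -/
def mysort3 (y : Fin 3 → α) : Perm (Fin 3) :=
  if y 0 < y 1 then
    if y 1 < y 2 then 1
    else if y 0 < y 2 then Equiv.swap 1 2
    else Equiv.swap 1 2 * Equiv.swap 0 1
  else
    if y 0 < y 2 then Equiv.swap 0 1
    else if y 1 < y 2 then Equiv.swap 0 1 * Equiv.swap 1 2
    else Equiv.swap 0 2

lemma opattern_eq_mysort3 {y : Fin 3 → α} (hy : Function.Injective y) :
    opattern y = mysort3 y := by
  have ne01 : y 0 ≠ y 1 := fun h => by simpa using hy h
  have ne02 : y 0 ≠ y 2 := fun h => by simpa using hy h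
  have ne12 : y 1 ≠ y 2 := fun h => by simpa using hy h
  apply opattern_eq_of hy
  unfold mysort3
  split_ifs with h1 h2 h3 h4 h5 <;>
    refine strictMono_of3 ?_ ?_ <;>
      (try simp only [Perm.mul_apply, Perm.one_apply, Equiv.swap_apply_def]) <;>
        (try norm_num) <;>
          first
            | assumption
            | exact (not_lt.1 ‹¬ y 1 < y 2›).lt_of_ne (Ne.symm ne12)
            | exact (not_lt.1 ‹¬ y 0 < y 2›).lt_of_ne (Ne.symm ne02)
            | exact (not_lt.1 ‹¬ y 0 < y 1›).lt_of_ne (Ne.symm ne01)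

lemma opattern_congr {β : Type*} [LinearOrder β] {y : Fin 3 → α} {z : Fin 3 → β}
    (hz : Function.Injective z) (h : ∀ i j, y i < y j ↔ z i < z j) :
    opattern y = opattern z := by
  have hy : Function.Injective y := by
    intro i j e
    apply hz
    have h1 : ¬ z i < z j := fun hl => absurd ((h i j).2 hl) (by rw [e]; exact lt_irrefl _)
    have h2 : ¬ z j < z i := fun hl => absurd ((h j i).2 hl) (by rw [e]; exact lt_irrefl _)
    exact le_antisymm (not_lt.1 h2) (not_lt.1 h1)
  have hzs : opattern z = Tuple.sort z := opattern_eq_of hz (strictMono_sort hz)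
  rw [hzs]
  apply opattern_eq_of hy
  intro i j hij
  exact (h _ _).2 (strictMono_sort hz hij)
end opat


section win
variable {N : ℕ}

/-- the window of 4 consecutive values of σ starting at position a -/
def win (σ : Perm (Fin N)) (a : ℕ) (ha : a + 3 < N) : Fin 4 → Fin N :=
  fun i => σ ⟨a + i, by have := i.isLt; omega⟩

lemma win_inj (σ : Perm (Fin N)) (a : ℕ) (ha : a + 3 < N) :
    Function.Injective (win σ a ha) := by
  intro i j h
  have := σ.injective h
  simp only [Fin.mk.injEq] at this
  exact Fin.ext (by omega)

/-- the 4-pattern of the window -/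
def pat4 (σ : Perm (Fin N)) (a : ℕ) (ha : a + 3 < N) : Perm (Fin 4) :=
  Tuple.sort (win σ a ha)

/-- the map from 4-patterns to transcripts -/
def G (π : Perm (Fin 4)) : Perm (Fin 3) :=
  transcript (mysort3 fun i : Fin 3 => π⁻¹ ⟨i.val, by have := i.isLt; omega⟩)
    (mysort3 fun i : Fin 3 => π⁻¹ ⟨i.val + 1, by have := i.isLt; omega⟩)

lemma win_lt_iff (σ : Perm (Fin N)) (a : ℕ) (ha : a + 3 < N) (u v : Fin 4) :
    win σ a ha u < win σ a ha v ↔ (pat4 σ a ha)⁻¹ u < (pat4 σ a ha)⁻¹ v := by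
  have hs := strictMono_sort (win_inj σ a ha)
  set π := Tuple.sort (win σ a ha) with hπ
  have h1 : win σ a ha u = (win σ a ha ∘ π) (π⁻¹ u) := by simp
  have h2 : win σ a ha v = (win σ a ha ∘ π) (π⁻¹ v) := by simp
  rw [h1, h2, hs.lt_iff_lt]
  rfl

lemma patN_left (σ : Perm (Fin N)) (a : ℕ) (ha : a + 3 < N) :
    patN σ a (by omega) =
      mysort3 fun i : Fin 3 => (pat4 σ a ha)⁻¹ ⟨i.val, by have := i.isLt; omega⟩ := by
  have hinj : Function.Injective
      fun i : Fin 3 => (pat4 σ a ha)⁻¹ (⟨i.val, by have := i.isLt; omega⟩ : Fin 4) := by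
    intro i j h
    have := (pat4 σ a ha)⁻¹.injective h
    simp only [Fin.mk.injEq] at this
    exact Fin.ext this
  rw [← opattern_eq_mysort3 hinj]
  unfold patN
  apply opattern_congr hinj
  intro i j
  exact win_lt_iff σ a ha ⟨i.val, by have := i.isLt; omega⟩ ⟨j.val, by have := j.isLt; omega⟩

lemma patN_right (σ : Perm (Fin N)) (a : ℕ) (ha : a + 3 < N) :
    patN σ (a + 1) (by omega) =
      mysort3 fun i : Fin 3 => (pat4 σ a ha)⁻¹ ⟨i.val + 1, by have := i.isLt; omega⟩ := by
  have hinj : Function.Injective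
      fun i : Fin 3 => (pat4 σ a ha)⁻¹ (⟨i.val + 1, by have := i.isLt; omega⟩ : Fin 4) := by
    intro i j h
    have := (pat4 σ a ha)⁻¹.injective h
    simp only [Fin.mk.injEq] at this
    exact Fin.ext (by omega)
  rw [← opattern_eq_mysort3 hinj]
  unfold patN
  apply opattern_congr hinj
  intro i j
  have e1 : σ ⟨a + 1 + i.val, by have := i.isLt; omega⟩ =
      win σ a ha ⟨i.val + 1, by have := i.isLt; omega⟩ := by
    apply congrArg; apply Fin.ext; show a + 1 + i.val = a + (i.val + 1); omega
  have e2 : σ ⟨a + 1 + j.val, by have := j.isLt; omega⟩ =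
      win σ a ha ⟨j.val + 1, by have := j.isLt; omega⟩ := by
    apply congrArg; apply Fin.ext; show a + 1 + j.val = a + (j.val + 1); omega
  rw [e1, e2]
  exact win_lt_iff σ a ha _ _

lemma tauN_eq_G (σ : Perm (Fin N)) (a : ℕ) (ha : a + 3 < N) :
    tauN σ a ha = G (pat4 σ a ha) := by
  unfold tauN G
  rw [patN_left σ a ha, patN_right σ a ha]

end win

section act
variable {N : ℕ}

/-- the block of 4 positions starting at a -/
def blk (a : ℕ) (ha : a + 3 < N) :
    Fin 4 ≃ {x : Fin N // a ≤ x.val ∧ x.val < a + 4} where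
  toFun i := ⟨⟨a + i, by have := i.isLt; omega⟩, by constructor <;> simp <;> omega⟩
  invFun x := ⟨x.1.val - a, by have := x.2; omega⟩
  left_inv i := by apply Fin.ext; simp
  right_inv x := by
    have := x.2
    apply Subtype.ext; apply Fin.ext; simp; omega

/-- the permutation of S_N acting on block positions -/
def E (a : ℕ) (ha : a + 3 < N) (ρ : Perm (Fin 4)) : Perm (Fin N) :=
  ρ.extendDomain (blk a ha)

lemma E_apply_in (a : ℕ) (ha : a + 3 < N) (ρ : Perm (Fin 4)) (i : Fin 4) :
    E a ha ρ ⟨a + i, by have := i.isLt; omega⟩ = ⟨a + ρ i, by have := (ρ i).isLt; omega⟩ := by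
  have h := Perm.extendDomain_apply_image ρ (blk a ha) i
  exact h

lemma E_apply_out (a : ℕ) (ha : a + 3 < N) (ρ : Perm (Fin 4)) (x : Fin N)
    (hx : x.val < a ∨ a + 4 ≤ x.val) : E a ha ρ x = x := by
  apply Perm.extendDomain_apply_not_subtype
  simp only [not_and, not_lt]
  omega

lemma win_mul (σ : Perm (Fin N)) (a : ℕ) (ha : a + 3 < N) (ρ : Perm (Fin 4)) :
    win (σ * E a ha ρ) a ha = win σ a ha ∘ ρ := by
  funext i
  show (σ * E a ha ρ) _ = _
  rw [Perm.mul_apply, E_apply_in]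
  rfl

lemma pat4_mul (σ : Perm (Fin N)) (a : ℕ) (ha : a + 3 < N) (ρ : Perm (Fin 4)) :
    pat4 (σ * E a ha ρ) a ha = ρ⁻¹ * pat4 σ a ha := by
  unfold pat4
  rw [win_mul, sort_comp_perm (win_inj σ a ha)]

lemma win_mul_out (σ : Perm (Fin N)) (a b : ℕ) (ha : a + 3 < N) (hb : b + 3 < N)
    (hab : a + 4 ≤ b ∨ b + 4 ≤ a) (ρ : Perm (Fin 4)) :
    win (σ * E a ha ρ) b hb = win σ b hb := by
  funext i
  show (σ * E a ha ρ) _ = _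
  rw [Perm.mul_apply, E_apply_out]
  · rfl
  · have := i.isLt; simp only []; omega

lemma pat4_mul_out (σ : Perm (Fin N)) (a b : ℕ) (ha : a + 3 < N) (hb : b + 3 < N)
    (hab : a + 4 ≤ b ∨ b + 4 ≤ a) (ρ : Perm (Fin 4)) :
    pat4 (σ * E a ha ρ) b hb = pat4 σ b hb := by
  unfold pat4
  rw [win_mul_out σ a b ha hb hab]

end act

section count
open scoped Classical
variable {N : ℕ}

lemma card_subtype_comp {α β : Type*} [Fintype α] [Fintype β] [DecidableEq β]
    (f : α → β) (q : β → Prop) (c : ℕ)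
    (hc : ∀ y : β, Nat.card {x : α // f x = y} = c) :
    Nat.card {x : α // q (f x)} = Nat.card {y : β // q y} * c := by
  have hfib : ∀ y : β, (Finset.univ.filter (fun x : α => f x = y)).card = c := by
    intro y
    have := hc y
    rwa [Nat.card_eq_fintype_card, Fintype.card_subtype] at this
  rw [Nat.card_eq_fintype_card, Fintype.card_subtype,
    Finset.card_eq_sum_card_fiberwise (f := f) (t := Finset.univ.filter q)
      (fun x hx => by simp at hx ⊢; exact hx)]
  have step : ∀ y ∈ Finset.univ.filter q,
      ((Finset.univ.filter (fun x : α => q (f x))).filter (fun x => f x = y)).card = c := by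
    intro y hy
    simp only [Finset.mem_filter, Finset.mem_univ, true_and] at hy
    rw [← hfib y]
    congr 1
    ext x
    simp only [Finset.mem_filter, Finset.mem_univ, true_and]
    constructor
    · exact fun h => h.2
    · exact fun h => ⟨h ▸ hy, h⟩
  rw [Finset.sum_congr rfl step, Finset.sum_const, smul_eq_mul,
    Nat.card_eq_fintype_card, Fintype.card_subtype]

lemma card_total {α β : Type*} [Fintype α] [Fintype β] [DecidableEq β]
    (f : α → β) (c : ℕ) (hc : ∀ y : β, Nat.card {x : α // f x = y} = c) :
    Fintype.card α = Fintype.card β * c := by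
  have hfib : ∀ y : β, (Finset.univ.filter (fun x : α => f x = y)).card = c := by
    intro y
    have := hc y
    rwa [Nat.card_eq_fintype_card, Fintype.card_subtype] at this
  rw [← Finset.card_univ (α := α),
    Finset.card_eq_sum_card_fiberwise
      (f := f) (t := (Finset.univ : Finset β)) (fun x _ => Finset.mem_univ _)]
  simp only [hfib]
  rw [Finset.sum_const, Finset.card_univ, smul_eq_mul]

/-- fibers of `pat4` are equinumerous -/
lemma pat4_fiber_card (a : ℕ) (ha : a + 3 < N) (π ρ : Perm (Fin 4)) :
    Nat.card {σ : Perm (Fin N) // pat4 σ a ha = π} =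
      Nat.card {σ : Perm (Fin N) // pat4 σ a ha = ρ} := by
  apply Nat.card_congr
  refine ⟨fun x => ⟨x.1 * E a ha (π * ρ⁻¹), ?_⟩, fun x => ⟨x.1 * E a ha (π * ρ⁻¹)⁻¹, ?_⟩,
    ?_, ?_⟩
  · rw [pat4_mul, x.2]; group
  · rw [pat4_mul, x.2]; group
  · intro x
    apply Subtype.ext
    show x.1 * _ * _ = x.1
    rw [mul_assoc]
    unfold E
    rw [← Perm.extendDomain_inv, mul_inv_cancel, mul_one]
  · intro x
    apply Subtype.ext
    show x.1 * _ * _ = x.1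
    rw [mul_assoc]
    unfold E
    rw [← Perm.extendDomain_inv, inv_mul_cancel, mul_one]

/-- fibers of the pair `(pat4 at a, pat4 at b)` are equinumerous, for disjoint blocks -/
lemma pat4_pair_fiber_card (a b : ℕ) (ha : a + 3 < N) (hb : b + 3 < N) (hab : a + 4 ≤ b)
    (p q : Perm (Fin 4) × Perm (Fin 4)) :
    Nat.card {σ : Perm (Fin N) // (pat4 σ a ha, pat4 σ b hb) = p} =
      Nat.card {σ : Perm (Fin N) // (pat4 σ a ha, pat4 σ b hb) = q} := by
  apply Nat.card_congr
  have key : ∀ (σ : Perm (Fin N)) (c d : Perm (Fin 4)),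
      (pat4 (σ * E a ha c * E b hb d) a ha, pat4 (σ * E a ha c * E b hb d) b hb) =
        (c⁻¹ * pat4 σ a ha, d⁻¹ * pat4 σ b hb) := by
    intro σ c d
    rw [Prod.mk.injEq]
    constructor
    · rw [pat4_mul_out (σ * E a ha c) b a hb ha (Or.inr hab), pat4_mul]
    · rw [pat4_mul, pat4_mul_out σ a b ha hb (Or.inl hab)]
  have key2 : ∀ (σ : Perm (Fin N)) (c d : Perm (Fin 4)),
      (pat4 (σ * E b hb d * E a ha c) a ha, pat4 (σ * E b hb d * E a ha c) b hb) =
        (c⁻¹ * pat4 σ a ha, d⁻¹ * pat4 σ b hb) := by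
    intro σ c d
    rw [Prod.mk.injEq]
    constructor
    · rw [pat4_mul, pat4_mul_out σ b a hb ha (Or.inr hab)]
    · rw [pat4_mul_out (σ * E b hb d) a b ha hb (Or.inl hab), pat4_mul]
  refine ⟨fun x => ⟨x.1 * E a ha (p.1 * q.1⁻¹) * E b hb (p.2 * q.2⁻¹), ?_⟩,
    fun x => ⟨x.1 * E b hb (p.2 * q.2⁻¹)⁻¹ * E a ha (p.1 * q.1⁻¹)⁻¹, ?_⟩, ?_, ?_⟩
  · have h1 : pat4 x.1 a ha = p.1 := congrArg Prod.fst x.2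
    have h2 : pat4 x.1 b hb = p.2 := congrArg Prod.snd x.2
    rw [key, h1, h2, Prod.mk.injEq]
    constructor <;> group
  · have h1 : pat4 x.1 a ha = q.1 := congrArg Prod.fst x.2
    have h2 : pat4 x.1 b hb = q.2 := congrArg Prod.snd x.2
    rw [key2, h1, h2, Prod.mk.injEq]
    constructor <;> group
  · intro x
    apply Subtype.ext
    show x.1 * _ * _ * _ * _ = x.1
    unfold E
    simp only [← Perm.extendDomain_inv]
    group
  · intro x
    apply Subtype.ext
    show x.1 * _ * _ * _ * _ = x.1
    unfold E
    simp only [← Perm.extendDomain_inv]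
    group

end count


section final
open scoped Classical
variable {N : ℕ}


/-- counts of `S_4` patterns realizing each transcript -/
def A : Fin 6 → ℕ := ![2, 2, 2, 7, 7, 4]

lemma pvec_eq (k : Fin 6) : pvec k = (A k : ℚ) / 24 := by
  fin_cases k <;> norm_num [pvec, A]

lemma cardG (k : Fin 6) : Nat.card {π : Perm (Fin 4) // G π = lab k} = A k := by
  rw [Nat.card_eq_fintype_card]
  fin_cases k <;> decide

lemma cardG2 (k l : Fin 6) :
    Nat.card {p : Perm (Fin 4) × Perm (Fin 4) // G p.1 = lab k ∧ G p.2 = lab l} =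
      A k * A l := by
  rw [Nat.card_congr (Equiv.subtypeProdEquivProd
    (p := fun π => G π = lab k) (q := fun π => G π = lab l)), Nat.card_prod,
    cardG k, cardG l]

lemma card_pat4_one (a : ℕ) (ha : a + 3 < N) :
    N.factorial = 24 * Nat.card {σ : Perm (Fin N) // pat4 σ a ha = 1} := by
  have h := card_total (fun σ : Perm (Fin N) => pat4 σ a ha)
    (Nat.card {σ : Perm (Fin N) // pat4 σ a ha = 1})
    (fun y => pat4_fiber_card a ha y 1)
  rw [Fintype.card_perm, Fintype.card_fin] at h
  rw [h, Fintype.card_perm, Fintype.card_fin]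
  norm_num [Nat.factorial]

lemma card_pat8_one (a b : ℕ) (ha : a + 3 < N) (hb : b + 3 < N) (hab : a + 4 ≤ b) :
    N.factorial = 576 *
      Nat.card {σ : Perm (Fin N) // (pat4 σ a ha, pat4 σ b hb) = (1, 1)} := by
  have h := card_total (fun σ : Perm (Fin N) => (pat4 σ a ha, pat4 σ b hb))
    (Nat.card {σ : Perm (Fin N) // (pat4 σ a ha, pat4 σ b hb) = (1, 1)})
    (fun y => pat4_pair_fiber_card a b ha hb hab y (1, 1))
  rw [Fintype.card_perm, Fintype.card_fin, Fintype.card_prod, Fintype.card_perm,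
    Fintype.card_fin] at h
  rw [h]
  norm_num [Nat.factorial]

lemma card_tau_marg (a : ℕ) (ha : a + 3 < N) (v : Perm (Fin 3)) :
    Nat.card {σ : Perm (Fin N) // tauN σ a ha = v} =
      Nat.card {π : Perm (Fin 4) // G π = v} *
        Nat.card {σ : Perm (Fin N) // pat4 σ a ha = 1} := by
  have he : {σ : Perm (Fin N) // tauN σ a ha = v} ≃
      {σ : Perm (Fin N) // G (pat4 σ a ha) = v} :=
    Equiv.subtypeEquivRight (fun σ => by rw [tauN_eq_G σ a ha])
  rw [Nat.card_congr he]
  exact card_subtype_comp (fun σ => pat4 σ a ha) (fun π => G π = v) _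
    (fun y => pat4_fiber_card a ha y 1)

lemma card_tau_joint (a b : ℕ) (ha : a + 3 < N) (hb : b + 3 < N) (hab : a + 4 ≤ b)
    (v w : Perm (Fin 3)) :
    Nat.card {σ : Perm (Fin N) // tauN σ a ha = v ∧ tauN σ b hb = w} =
      Nat.card {p : Perm (Fin 4) × Perm (Fin 4) // G p.1 = v ∧ G p.2 = w} *
        Nat.card {σ : Perm (Fin N) // (pat4 σ a ha, pat4 σ b hb) = (1, 1)} := by
  have he : {σ : Perm (Fin N) // tauN σ a ha = v ∧ tauN σ b hb = w} ≃
      {σ : Perm (Fin N) //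
        (fun p : Perm (Fin 4) × Perm (Fin 4) => G p.1 = v ∧ G p.2 = w)
          (pat4 σ a ha, pat4 σ b hb)} :=
    Equiv.subtypeEquivRight (fun σ => by
      rw [tauN_eq_G σ a ha, tauN_eq_G σ b hb])
  rw [Nat.card_congr he]
  exact card_subtype_comp (fun σ : Perm (Fin N) => (pat4 σ a ha, pat4 σ b hb))
    (fun p => G p.1 = v ∧ G p.2 = w) _
    (fun y => pat4_pair_fiber_card a b ha hb hab y (1, 1))

end final


/-- For lags `h = s − t ≥ 4`, the transcripts `τ_t` and `τ_s` (1-based indices, so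
`τ_t` is `tauN σ (t-1)`) of a uniformly distributed `σ ∈ S_N` are independent,
with marginals `(1/24)(2,2,2,7,7,4)`. -/
theorem transcripts_independent_lag_ge_four
    (N t s : ℕ) (hN : 8 ≤ N) (ht : 1 ≤ t) (hts : t + 4 ≤ s) (hs : s + 3 ≤ N) :
    ∀ k l : Fin 6,
      (Nat.card {σ : Perm (Fin N) //
          tauN σ (t - 1) (by omega) = lab k ∧ tauN σ (s - 1) (by omega) = lab l} : ℚ) /
          (Nat.factorial N) =
        ((Nat.card {σ : Perm (Fin N) // tauN σ (t - 1) (by omega) = lab k} : ℚ) /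
          (Nat.factorial N)) *
        ((Nat.card {σ : Perm (Fin N) // tauN σ (s - 1) (by omega) = lab l} : ℚ) /
          (Nat.factorial N)) ∧
      (Nat.card {σ : Perm (Fin N) // tauN σ (t - 1) (by omega) = lab k} : ℚ) /
          (Nat.factorial N) = pvec k ∧
      (Nat.card {σ : Perm (Fin N) // tauN σ (s - 1) (by omega) = lab l} : ℚ) /
          (Nat.factorial N) = pvec l := by
  intro k l
  have ha : t - 1 + 3 < N := by omega
  have hb : s - 1 + 3 < N := by omega
  have hab : t - 1 + 4 ≤ s - 1 := by omega
  have m1 := card_tau_marg (t - 1) ha (lab k)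
  have m2 := card_tau_marg (s - 1) hb (lab l)
  have mj := card_tau_joint (t - 1) (s - 1) ha hb hab (lab k) (lab l)
  have f1 := card_pat4_one (t - 1) ha
  have f2 := card_pat4_one (s - 1) hb
  have fj := card_pat8_one (t - 1) (s - 1) ha hb hab
  set c1 := Nat.card {σ : Perm (Fin N) // pat4 σ (t - 1) ha = 1} with hc1
  set c2 := Nat.card {σ : Perm (Fin N) // pat4 σ (s - 1) hb = 1} with hc2
  set cj := Nat.card {σ : Perm (Fin N) //
    (pat4 σ (t - 1) ha, pat4 σ (s - 1) hb) = (1, 1)} with hcj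
  rw [cardG k] at m1
  rw [cardG l] at m2
  rw [cardG2 k l] at mj
  have hx : ((N.factorial : ℚ)) ≠ 0 := by
    exact_mod_cast Nat.factorial_ne_zero N
  have F1 : (N.factorial : ℚ) = 24 * c1 := by exact_mod_cast congrArg Nat.cast f1
  have F2 : (N.factorial : ℚ) = 24 * c2 := by exact_mod_cast congrArg Nat.cast f2
  have FJ : (N.factorial : ℚ) = 576 * cj := by exact_mod_cast congrArg Nat.cast fj
  have hc1' : (c1 : ℚ) = (N.factorial : ℚ) / 24 := by rw [F1]; ring
  have hc2' : (c2 : ℚ) = (N.factorial : ℚ) / 24 := by rw [F2]; ring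
  have hcj' : (cj : ℚ) = (N.factorial : ℚ) / 576 := by rw [FJ]; ring
  refine ⟨?_, ?_, ?_⟩
  · rw [mj, m1, m2]
    push_cast
    rw [hc1', hc2', hcj']
    field_simp
    ring
  · rw [m1]
    push_cast
    rw [hc1', pvec_eq k]
    field_simp
  · rw [m2]
    push_cast
    rw [hc2', pvec_eq l]
    field_simp
end

section
/- Let Σ_τ be the 6×6 matrix equal to (1/20160) times the matrix with rows (1820, 28, 28, −462, −462, −952), (28, 1020, 380, −406, −406, −616), (28, 380, 1020, −406, −406, −616), (−462, −406, −406, 6259, −4453, −532), (−462, −406, −406, −4453, 6259, −532), (−952, −616, −616, −532, −532, 3248). Let T_C be the 3×6 matrix with rows (1,0,0,0,0,0), (0,1,1,0,0,1), (0,0,0,1,1,0), and T_K the 4×6 matrix with rows (1,0,0,0,0,0), (0,1,1,0,0,0), (0,0,0,1,1,0), (0,0,0,0,0,1). Then Σ_C := T_C Σ_τ T_Cᵀ equals (1/720) times the matrix with rows (65, −32, −33), (−32, 128, −96), (−33, −96, 129) and has rank 2, and Σ_K := T_K Σ_τ T_Kᵀ equals (1/720) times the matrix with rows (65, 2, −33,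 −34), (2, 100, −58, −44), (−33, −58, 129, −38), (−34, −44, −38, 116) and has rank 3. -/
/-!
Since the transcript frequencies sum to one, `Σ_τ` annihilates the all-ones vector; since every
transcript class is aggregated into exactly one distance value, `Tᵀ` fixes the all-ones vector,
so `T Σ_τ Tᵀ` annihilates it too and has corank at least one. A nonvanishing leading principal
minor of size one less gives the matching lower bound on the rank.
-/

/-- The asymptotic covariance matrix `Σ_τ` of the transcript frequencies under the
i.i.d. null. -/
noncomputable def SigmaTau : Matrix (Fin 6) (Fin 6) ℚ :=
  (1/20160 : ℚ) •
    !![1820, 28, 28, -462, -462, -952;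
       28, 1020, 380, -406, -406, -616;
       28, 380, 1020, -406, -406, -616;
       -462, -406, -406, 6259, -4453, -532;
       -462, -406, -406, -4453, 6259, -532;
       -952, -616, -616, -532, -532, 3248]

/-- The aggregation matrix from transcripts to Cayley-distance values. -/
def Tcay : Matrix (Fin 3) (Fin 6) ℚ :=
  !![1, 0, 0, 0, 0, 0;
     0, 1, 1, 0, 0, 1;
     0, 0, 0, 1, 1, 0]

/-- The aggregation matrix from transcripts to Kendall-distance values. -/
def Tken : Matrix (Fin 4) (Fin 6) ℚ :=
  !![1, 0, 0, 0, 0, 0;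
     0, 1, 1, 0, 0, 0;
     0, 0, 0, 1, 1, 0;
     0, 0, 0, 0, 0, 1]

namespace Matrix

variable {m n k K : Type*} [Field K]

theorem rank_lt_card_of_mulVec_eq_zero [Fintype n] {A : Matrix m n K} {v : n → K}
    (hv : v ≠ 0) (hAv : A *ᵥ v = 0) : A.rank < Fintype.card n := by
  have hker : 0 < Module.finrank K (LinearMap.ker A.mulVecLin) :=
    Module.finrank_pos_iff_exists_ne_zero.mpr ⟨⟨v, hAv⟩, mt (congrArg Subtype.val) hv⟩
  have hrank_nullity := LinearMap.finrank_range_add_finrank_ker A.mulVecLin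
  rw [Module.finrank_fintype_fun_eq_card] at hrank_nullity
  rw [rank]
  omega

theorem card_le_rank_of_det_submatrix_ne_zero [Fintype n] [Fintype k] [DecidableEq k]
    (A : Matrix m n K) (r : k → m) (c : k → n) (h : (A.submatrix r c).det ≠ 0) :
    Fintype.card k ≤ A.rank :=
  (rank_of_det_ne_zero h).symm.trans_le (rank_submatrix_le A r c)

theorem rank_eq_of_mulVec_eq_zero_of_det_submatrix_ne_zero {d : ℕ}
    {A : Matrix (Fin (d + 1)) (Fin (d + 1)) K} {v : Fin (d + 1) → K} (hv : v ≠ 0)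
    (hAv : A *ᵥ v = 0) (h : (A.submatrix Fin.castSucc Fin.castSucc).det ≠ 0) :
    A.rank = d := by
  have hlt := rank_lt_card_of_mulVec_eq_zero hv hAv
  have hle := card_le_rank_of_det_submatrix_ne_zero A _ _ h
  simp only [Fintype.card_fin] at hlt hle
  omega

theorem mul_mul_transpose_mulVec_one_eq_zero {R : Type*} [CommSemiring R] [Fintype m] [Fintype n]
    {T : Matrix m n R} {S : Matrix n n R} (hS : S *ᵥ 1 = 0) (hT : Tᵀ *ᵥ 1 = 1) :
    (T * S * Tᵀ) *ᵥ 1 = 0 := by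
  rw [← mulVec_mulVec, hT, ← mulVec_mulVec, hS, mulVec_zero]

end Matrix

open Matrix

theorem SigmaTau_mulVec_one : SigmaTau *ᵥ 1 = 0 := by
  ext i
  fin_cases i <;> norm_num [SigmaTau, mulVec, dotProduct, Fin.sum_univ_succ]

theorem Tcay_transpose_mulVec_one : Tcayᵀ *ᵥ 1 = 1 := by
  ext i
  fin_cases i <;> simp [Tcay, mulVec, dotProduct, Fin.sum_univ_succ]

theorem Tken_transpose_mulVec_one : Tkenᵀ *ᵥ 1 = 1 := by
  ext i
  fin_cases i <;> simp [Tken, mulVec, dotProduct, Fin.sum_univ_succ]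

theorem Tcay_mul_SigmaTau_mul_transpose : Tcay * SigmaTau * Tcayᵀ = (1/720 : ℚ) •
      !![65, -32, -33;
         -32, 128, -96;
         -33, -96, 129] := by
  ext i j
  fin_cases i <;> fin_cases j <;> norm_num [Tcay, SigmaTau, mul_apply, Fin.sum_univ_succ]

theorem Tken_mul_SigmaTau_mul_transpose : Tken * SigmaTau * Tkenᵀ = (1/720 : ℚ) •
      !![65, 2, -33, -34;
         2, 100, -58, -44;
         -33, -58, 129, -38;
         -34, -44, -38, 116] := by
  ext i j
  fin_cases i <;> fin_cases j <;> norm_num [Tken, SigmaTau, mul_apply, Fin.sum_univ_succ]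

/-- `Σ_C = T_C Σ_τ T_Cᵀ` and `Σ_K = T_K Σ_τ T_Kᵀ` in explicit form, with ranks `2`
and `3` respectively. -/
theorem sigmaC_sigmaK_eq_and_rank :
    Tcay * SigmaTau * Tcay.transpose = (1/720 : ℚ) •
      !![65, -32, -33;
         -32, 128, -96;
         -33, -96, 129] ∧
    (Tcay * SigmaTau * Tcay.transpose).rank = 2 ∧
    Tken * SigmaTau * Tken.transpose = (1/720 : ℚ) •
      !![65, 2, -33, -34;
         2, 100, -58, -44;
         -33, -58, 129, -38;
         -34, -44, -38, 116] ∧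
    (Tken * SigmaTau * Tken.transpose).rank = 3 := by
  refine ⟨Tcay_mul_SigmaTau_mul_transpose, ?_, Tken_mul_SigmaTau_mul_transpose, ?_⟩
  · refine rank_eq_of_mulVec_eq_zero_of_det_submatrix_ne_zero one_ne_zero
      (mul_mul_transpose_mulVec_one_eq_zero SigmaTau_mulVec_one Tcay_transpose_mulVec_one) ?_
    rw [Tcay_mul_SigmaTau_mul_transpose, det_fin_two]
    norm_num
  · refine rank_eq_of_mulVec_eq_zero_of_det_submatrix_ne_zero one_ne_zero
      (mul_mul_transpose_mulVec_one_eq_zero SigmaTau_mulVec_one Tken_transpose_mulVec_one) ?_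
    rw [Tken_mul_SigmaTau_mul_transpose, det_fin_three]
    norm_num [Fin.castSucc, Fin.castAdd, Fin.castLE]
end
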